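/- For t ≥ 1 and n ≥ 1, the trace norm satisfies ‖(1/2^{n-1}) Σ_{k∈Ω_n} ((ρ⁰_k)^{⊗t} − (I/2^n)^{⊗t})‖_tr ≤ √((2^t−1)/2^{n-1}) < √(2^{t}/2^{n-1}) = √(1/2^{n-1-t}) = √2 · 2^{-(n-t)/2}; in particular it is at most 2^{-(n-t)/2} up to a constant. -/

import Mathlib

open Matrix Finset
open scoped ComplexOrder Kronecker

/-- Trace norm `tr √(Aᴴ A)` of a complex square matrix. -/
noncomputable def traceNorm {ι : Type*} [Fintype ι] [DecidableEq ι] (A : Matrix ι ι ℂ) : ℝ :=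
  (((Matrix.posSemidef_conjTranspose_mul_self A).1.eigenvectorUnitary.1 *
      diagonal (((↑) : ℝ → ℂ) ∘ (√·) ∘ (Matrix.posSemidef_conjTranspose_mul_self A).1.eigenvalues) *
      (star (Matrix.posSemidef_conjTranspose_mul_self A).1.eigenvectorUnitary : Matrix ι ι ℂ)).trace).re

/-- Bitwise XOR on bit strings. -/
def xo {n : ℕ} (i k : Fin n → Bool) : Fin n → Bool := fun j => xor (i j) (k j)

/-- Hamming weight of a bit string. -/
def wt {n : ℕ} (i : Fin n → Bool) : ℕ := (Finset.univ.filter fun j => i j = true).card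

/-- The rank-one operator `|i⟩⟨j|`. -/
def ketbra {n : ℕ} (i j : Fin n → Bool) : Matrix (Fin n → Bool) (Fin n → Bool) ℂ :=
  Matrix.single i j 1

/-- `ρ⁰_{k,i} = ½(|i⟩+|i⊕k⟩)(⟨i|+⟨i⊕k|)`. -/
noncomputable def rho0 {n : ℕ} (k i : Fin n → Bool) : Matrix (Fin n → Bool) (Fin n → Bool) ℂ :=
  (1/2 : ℂ) • (ketbra i i + ketbra i (xo i k) + ketbra (xo i k) i + ketbra (xo i k) (xo i k))

/-- `ρ¹_{k,i} = ½(|i⟩-|i⊕k⟩)(⟨i|-⟨i⊕k|)`. -/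
noncomputable def rho1 {n : ℕ} (k i : Fin n → Bool) : Matrix (Fin n → Bool) (Fin n → Bool) ℂ :=
  (1/2 : ℂ) • (ketbra i i - ketbra i (xo i k) - ketbra (xo i k) i + ketbra (xo i k) (xo i k))

/-- `Ω_n`, the set of bit strings of odd Hamming weight. -/
def Omega (n : ℕ) : Finset (Fin n → Bool) := Finset.univ.filter fun k => Odd (wt k)
/-- `ρ⁰_k`, the mixture of `ρ⁰_{k,i}` over `i`. -/
noncomputable def rho0k {n : ℕ} (k : Fin n → Bool) : Matrix (Fin n → Bool) (Fin n → Bool) ℂ :=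
  ((1 : ℂ) / 2 ^ n) • ∑ i : Fin n → Bool, rho0 k i

/-- `t`-fold tensor (Kronecker) power of a matrix. -/
def tpow {ι : Type*} (M : Matrix ι ι ℂ) (t : ℕ) : Matrix (Fin t → ι) (Fin t → ι) ℂ :=
  fun f g => ∏ j, M (f j) (g j)

lemma traceNorm_le {ι : Type*} [Fintype ι] [DecidableEq ι] (A : Matrix ι ι ℂ) :
    traceNorm A ≤ Real.sqrt ((Fintype.card ι : ℝ) * ((Aᴴ * A).trace).re) := by
  set hP := Matrix.posSemidef_conjTranspose_mul_self A with hPdef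
  set Q := (hP.1.eigenvectorUnitary.1 *
      diagonal (((↑) : ℝ → ℂ) ∘ (√·) ∘ hP.1.eigenvalues) *
      (star hP.1.eigenvectorUnitary : Matrix ι ι ℂ)) with hQdef
  have hQ : Q.PosSemidef := by
    have hd : (diagonal (((↑) : ℝ → ℂ) ∘ (√·) ∘ hP.1.eigenvalues)).PosSemidef :=
      posSemidef_diagonal_iff.mpr fun i => by
        simp only [Function.comp_apply]; exact Complex.zero_le_real.mpr (Real.sqrt_nonneg _)
    have := hd.mul_mul_conjTranspose_same (hP.1.eigenvectorUnitary.1)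
    rw [hQdef]
    convert this using 2
    simp [Matrix.star_eq_conjTranspose]
  have hdiag : ∀ i, 0 ≤ Q i i := by
    intro i
    exact hQ.diag_nonneg
  have hre : ∀ i, 0 ≤ (Q i i).re ∧ (Q i i).im = 0 := by
    intro i
    have := (Complex.nonneg_iff).mp (hdiag i)
    exact ⟨this.1, this.2.symm⟩
  have htr : traceNorm A = ∑ i, (Q i i).re := by
    simp [traceNorm, Matrix.trace, Matrix.diag, Complex.re_sum, hQdef, hPdef]
  -- Cauchy-Schwarz
  have hcs : (∑ i, (Q i i).re) ^ 2 ≤ (Fintype.card ι : ℝ) * ∑ i, (Q i i).re ^ 2 := by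
    simpa using sq_sum_le_card_mul_sum_sq (s := Finset.univ) (f := fun i => (Q i i).re)
  have h2 : ∑ i, (Q i i).re ^ 2 ≤ ((Aᴴ * A).trace).re := by
    have hQQ : Q * Q = Aᴴ * A := by
      have hU : (star hP.1.eigenvectorUnitary : Matrix ι ι ℂ) * hP.1.eigenvectorUnitary.1 = 1 :=
        Unitary.star_mul_self_of_mem hP.1.eigenvectorUnitary.2
      have hDD : diagonal (((↑) : ℝ → ℂ) ∘ (√·) ∘ hP.1.eigenvalues) *
          diagonal (((↑) : ℝ → ℂ) ∘ (√·) ∘ hP.1.eigenvalues)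
          = diagonal (((↑) : ℝ → ℂ) ∘ hP.1.eigenvalues) := by
        rw [diagonal_mul_diagonal]
        congr 1
        funext i
        simp only [Function.comp_apply]
        rw [← Complex.ofReal_mul, Real.mul_self_sqrt (hP.eigenvalues_nonneg i)]
      calc Q * Q = hP.1.eigenvectorUnitary.1 *
            (diagonal (((↑) : ℝ → ℂ) ∘ (√·) ∘ hP.1.eigenvalues) *
              diagonal (((↑) : ℝ → ℂ) ∘ (√·) ∘ hP.1.eigenvalues)) *
            (star hP.1.eigenvectorUnitary : Matrix ι ι ℂ) := by
            simp only [hQdef, mul_assoc]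
            rw [← mul_assoc (star hP.1.eigenvectorUnitary : Matrix ι ι ℂ), hU, one_mul]
        _ = Aᴴ * A := by
            rw [hDD]
            exact hP.1.spectral_theorem.symm
    have : ((Aᴴ * A).trace).re = ∑ i, ∑ j, Complex.normSq (Q i j) := by
      rw [← hQQ]
      have hherm : Qᴴ = Q := hQ.1
      calc ((Q * Q).trace).re = ((Qᴴ * Q).trace).re := by rw [hherm]
        _ = ∑ i, ∑ j, Complex.normSq (Q j i) := by
            simp [Matrix.trace, Matrix.diag, Matrix.mul_apply, Complex.re_sum,
              Matrix.conjTranspose_apply, Complex.normSq_eq_conj_mul_self, Complex.normSq_apply]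
        _ = ∑ i, ∑ j, Complex.normSq (Q i j) := Finset.sum_comm
    rw [this]
    apply Finset.sum_le_sum
    intro i _
    calc (Q i i).re ^ 2 ≤ Complex.normSq (Q i i) := by
          rw [Complex.normSq_apply]; nlinarith [sq_nonneg (Q i i).im]
      _ ≤ ∑ j, Complex.normSq (Q i j) := by
          exact Finset.single_le_sum (f := fun j => Complex.normSq (Q i j))
            (fun j _ => Complex.normSq_nonneg _) (Finset.mem_univ i)
  have hnn : 0 ≤ traceNorm A := by
    rw [htr]; exact Finset.sum_nonneg fun i _ => (hre i).1
  have : traceNorm A ^ 2 ≤ (Fintype.card ι : ℝ) * ((Aᴴ * A).trace).re := by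
    rw [htr]
    exact hcs.trans (by nlinarith [Finset.card_univ (α := ι)])
  calc traceNorm A = Real.sqrt (traceNorm A ^ 2) := (Real.sqrt_sq hnn).symm
    _ ≤ _ := Real.sqrt_le_sqrt this

lemma xo_ne_self {n : ℕ} {k : Fin n → Bool} (hk : Odd (wt k)) (i : Fin n → Bool) :
    xo i k ≠ i := by
  intro h
  have hz : ∀ j, k j = false := by
    intro j
    have := congrFun h j
    simp only [xo] at this
    cases hij : i j <;> cases hkj : k j <;> simp [hij, hkj] at this ⊢
  have : wt k = 0 := by simp [wt, hz]
  rw [this] at hk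
  simp at hk

lemma xo_right_cancel {n : ℕ} {i k k' : Fin n → Bool} (h : xo i k = xo i k') : k = k' := by
  funext j
  have := congrFun h j
  simp only [xo] at this
  cases hij : i j <;> cases hkj : k j <;> cases hkj' : k' j <;> simp_all

lemma xo_xo {n : ℕ} (i k : Fin n → Bool) : xo (xo i k) k = i := by
  funext j; simp [xo, Bool.xor_assoc]

lemma wt_flip {n : ℕ} (hn : 1 ≤ n) (k : Fin n → Bool) :
    (Odd (wt (Function.update k ⟨0, hn⟩ (!(k ⟨0, hn⟩)))) ↔ ¬ Odd (wt k)) := by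
  set j0 : Fin n := ⟨0, hn⟩
  have hsplit : ∀ b : Fin n → Bool,
      wt b = (if b j0 then 1 else 0) + ∑ j ∈ Finset.univ.erase j0, (if b j then 1 else 0) := by
    intro b
    rw [wt, Finset.card_filter, ← Finset.add_sum_erase _ _ (Finset.mem_univ j0)]
  have hrest : ∑ j ∈ Finset.univ.erase j0, (if Function.update k j0 (!(k j0)) j then 1 else 0)
      = ∑ j ∈ Finset.univ.erase j0, (if k j then 1 else 0) := by
    apply Finset.sum_congr rfl
    intro j hj
    rw [Function.update_of_ne (Finset.ne_of_mem_erase hj)]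
  rw [hsplit, hsplit, hrest, Function.update_self]
  cases h : k j0 <;> simp [h, Nat.even_add_one, Nat.odd_add_one, parity_simps]

lemma card_Omega {n : ℕ} (hn : 1 ≤ n) : (Omega n).card = 2 ^ (n - 1) := by
  classical
  have key : (Omega n).card = (Finset.univ.filter fun k : Fin n → Bool => ¬ Odd (wt k)).card := by
    apply Finset.card_bij' (fun k _ => Function.update k ⟨0, hn⟩ (!(k ⟨0, hn⟩)))
      (fun k _ => Function.update k ⟨0, hn⟩ (!(k ⟨0, hn⟩)))
    case hi =>
      intro k hk
      simp only [Omega, Finset.mem_filter, Finset.mem_univ, true_and] at hk ⊢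
      exact fun h => ((wt_flip hn k).mp h) hk
    case hj =>
      intro k hk
      simp only [Omega, Finset.mem_filter, Finset.mem_univ, true_and] at hk ⊢
      exact (wt_flip hn k).mpr hk
    all_goals
      intro k _
      funext j
      by_cases hj : j = ⟨0, hn⟩ <;> simp [hj, Function.update_of_ne] <;> rw [hj]
  have htot := Finset.card_filter_add_card_filter_not
    (s := (Finset.univ : Finset (Fin n → Bool))) (p := fun k => Odd (wt k))
  have hcard : (Finset.univ : Finset (Fin n → Bool)).card = 2 ^ n := by
    simp [Finset.card_univ]
  have hOm : (Omega n).card = (Finset.univ.filter fun k : Fin n → Bool => Odd (wt k)).card := rfl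
  have h2 : 2 ^ n = 2 * 2 ^ (n - 1) := by
    conv_lhs => rw [show n = (n-1)+1 by omega]
    ring
  omega


lemma xo_eq_iff {n : ℕ} {i j k : Fin n → Bool} : xo i k = j ↔ i = xo j k := by
  constructor
  · rintro rfl; rw [xo_xo]
  · rintro rfl; rw [xo_xo]

lemma rho0k_apply {n : ℕ} (k i j : Fin n → Bool) :
    rho0k k i j = ((1:ℂ)/2^n) * ((if j = i then 1 else 0) + (if j = xo i k then 1 else 0)) := by
  rw [rho0k, Matrix.smul_apply, smul_eq_mul]
  congr 1
  rw [Matrix.sum_apply]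
  simp only [rho0, ketbra, Matrix.smul_apply, Matrix.add_apply, Matrix.single,
    Matrix.of_apply, smul_eq_mul]
  rw [← Finset.mul_sum, Finset.sum_add_distrib, Finset.sum_add_distrib, Finset.sum_add_distrib]
  have E1 : ∑ x : Fin n → Bool, (if x = i ∧ x = j then (1:ℂ) else 0) = if j = i then 1 else 0 := by
    simp only [ite_and, Finset.sum_ite_eq']
    simp [eq_comm]
  have E2 : ∑ x : Fin n → Bool, (if x = i ∧ xo x k = j then (1:ℂ) else 0)
      = if j = xo i k then 1 else 0 := by
    simp only [ite_and, Finset.sum_ite_eq']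
    simp [eq_comm]
  have E3 : ∑ x : Fin n → Bool, (if xo x k = i ∧ x = j then (1:ℂ) else 0)
      = if j = xo i k then 1 else 0 := by
    simp only [xo_eq_iff, ite_and, Finset.sum_ite_eq']
    simp only [Finset.mem_univ, if_true]
    by_cases h : j = xo i k
    · subst h; simp [xo_xo]
    · rw [if_neg h, if_neg]
      intro hc
      exact h (by rw [hc, xo_xo])
  have E4 : ∑ x : Fin n → Bool, (if xo x k = i ∧ xo x k = j then (1:ℂ) else 0)
      = if j = i then 1 else 0 := by
    simp only [xo_eq_iff, ite_and, Finset.sum_ite_eq']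
    simp only [Finset.mem_univ, if_true, xo_xo]
    by_cases h : i = j <;> simp [h, eq_comm]
  rw [E1, E2, E3, E4]
  ring


lemma prod_ite_one {ι : Type*} [Fintype ι] (p : ι → Prop) [DecidablePred p] :
    (∏ j, (if p j then (1:ℂ) else 0)) = if ∀ j, p j then 1 else 0 := by
  by_cases h : ∀ j, p j
  · rw [if_pos h]
    exact Finset.prod_eq_one fun j _ => by rw [if_pos (h j)]
  · rw [if_neg h]
    push_neg at h
    obtain ⟨j, hj⟩ := h
    exact Finset.prod_eq_zero (Finset.mem_univ j) (by rw [if_neg hj])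

lemma ite_or_add {n : ℕ} {k : Fin n → Bool} (hk : Odd (wt k)) (a b : Fin n → Bool) :
    (if b = a ∨ b = xo a k then (1:ℂ) else 0)
      = (if b = a then (1:ℂ) else 0) + (if b = xo a k then 1 else 0) := by
  by_cases h1 : b = a <;> by_cases h2 : b = xo a k
  · exact absurd (h1 ▸ h2 : a = xo a k) (fun h => xo_ne_self hk a h.symm)
  · subst h1; simp [h2]
  · simp [h1, h2, xo_ne_self hk a]
  · simp [h1, h2]

lemma tpow_rho0k_apply {n t : ℕ} {k : Fin n → Bool} (hk : Odd (wt k))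
    (f g : Fin t → Fin n → Bool) :
    tpow (rho0k k) t f g
      = ((1:ℂ)/2^(n*t)) * (if ∀ j, g j = f j ∨ g j = xo (f j) k then 1 else 0) := by
  show (∏ j, rho0k k (f j) (g j)) = _
  calc (∏ j, rho0k k (f j) (g j))
      = ∏ j, (((1:ℂ)/2^n) * (if g j = f j ∨ g j = xo (f j) k then 1 else 0)) := by
        refine Finset.prod_congr rfl fun j _ => ?_
        rw [rho0k_apply, ite_or_add hk]
    _ = (((1:ℂ)/2^n))^t * ∏ j, (if g j = f j ∨ g j = xo (f j) k then (1:ℂ) else 0) := by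
        rw [Finset.prod_mul_distrib, Finset.prod_const, Finset.card_univ, Fintype.card_fin]
    _ = _ := by
        rw [prod_ite_one (fun j => g j = f j ∨ g j = xo (f j) k), div_pow, one_pow, ← pow_mul]
        congr!

lemma tpow_id_apply {n t : ℕ} (f g : Fin t → Fin n → Bool) :
    tpow (((1:ℂ)/2^n) • (1 : Matrix (Fin n → Bool) (Fin n → Bool) ℂ)) t f g
      = ((1:ℂ)/2^(n*t)) * (if f = g then 1 else 0) := by
  show (∏ j, (((1:ℂ)/2^n) • (1 : Matrix (Fin n → Bool) (Fin n → Bool) ℂ)) (f j) (g j)) = _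
  calc (∏ j, (((1:ℂ)/2^n) • (1 : Matrix (Fin n → Bool) (Fin n → Bool) ℂ)) (f j) (g j))
      = ∏ j, (((1:ℂ)/2^n) * (if f j = g j then 1 else 0)) := by
        refine Finset.prod_congr rfl fun j _ => ?_
        rw [Matrix.smul_apply, Matrix.one_apply, smul_eq_mul]
    _ = (((1:ℂ)/2^n))^t * ∏ j, (if f j = g j then (1:ℂ) else 0) := by
        rw [Finset.prod_mul_distrib, Finset.prod_const, Finset.card_univ, Fintype.card_fin]
    _ = _ := by
        rw [prod_ite_one (fun j => f j = g j), div_pow, one_pow, ← pow_mul]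
        congr 1
        simp [funext_iff]

lemma diff_apply {n t : ℕ} {k : Fin n → Bool} (hk : Odd (wt k))
    (f g : Fin t → Fin n → Bool) :
    (tpow (rho0k k) t - tpow (((1:ℂ)/2^n) • (1 : Matrix (Fin n → Bool) (Fin n → Bool) ℂ)) t) f g
      = ((1:ℂ)/2^(n*t)) *
          (if (¬ f = g) ∧ ∀ j, g j = f j ∨ g j = xo (f j) k then 1 else 0) := by
  rw [Matrix.sub_apply, tpow_rho0k_apply hk, tpow_id_apply]
  by_cases hfg : f = g
  · subst hfg
    rw [if_pos rfl, if_pos (fun j => Or.inl rfl), if_neg (by simp)]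
    ring
  · rw [if_neg hfg]
    by_cases hall : ∀ j, g j = f j ∨ g j = xo (f j) k
    · rw [if_pos hall, if_pos ⟨hfg, hall⟩]; ring
    · rw [if_neg hall, if_neg (fun h => hall h.2)]; ring

lemma mem_Omega {n : ℕ} {k : Fin n → Bool} : k ∈ Omega n ↔ Odd (wt k) := by
  simp [Omega]

noncomputable def ind (n t : ℕ) (k : Fin n → Bool) (f g : Fin t → Fin n → Bool) : ℂ :=
  if (¬ f = g) ∧ ∀ j, g j = f j ∨ g j = xo (f j) k then 1 else 0

lemma conj_ind {n t : ℕ} (k : Fin n → Bool) (f g : Fin t → Fin n → Bool) :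
    (starRingEnd ℂ) (ind n t k f g) = ind n t k f g := by
  rw [ind]; split_ifs <;> simp

lemma ind_nonneg_sq {n t : ℕ} (k : Fin n → Bool) (f g : Fin t → Fin n → Bool) :
    ind n t k f g * ind n t k f g = ind n t k f g := by
  rw [ind]; split_ifs <;> ring

lemma ind_mul_ind {n t : ℕ} {k k' : Fin n → Bool} (hne : k' ≠ k)
    (f g : Fin t → Fin n → Bool) : ind n t k f g * ind n t k' f g = 0 := by
  rw [ind, ind]
  split_ifs with h1 h2
  · exfalso
    obtain ⟨hfg, hall⟩ := h1
    obtain ⟨-, hall'⟩ := h2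
    obtain ⟨j0, hj0⟩ := Function.ne_iff.mp hfg
    have e1 : g j0 = xo (f j0) k := (hall j0).resolve_left (Ne.symm hj0)
    have e2 : g j0 = xo (f j0) k' := (hall' j0).resolve_left (Ne.symm hj0)
    exact hne (xo_right_cancel (e1.symm.trans e2)).symm
  all_goals ring

lemma sum_ind_sq {n t : ℕ} (f g : Fin t → Fin n → Bool) :
    (∑ k ∈ Omega n, ind n t k f g) * (∑ k ∈ Omega n, ind n t k f g)
      = ∑ k ∈ Omega n, ind n t k f g := by
  rw [Finset.sum_mul_sum]
  calc ∑ k ∈ Omega n, ∑ k' ∈ Omega n, ind n t k f g * ind n t k' f g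
      = ∑ k ∈ Omega n, ind n t k f g := by
        refine Finset.sum_congr rfl fun k hk => ?_
        rw [Finset.sum_eq_single_of_mem k hk (fun k' _ h => ind_mul_ind h f g)]
        exact ind_nonneg_sq k f g

lemma sum_g_ind {n t : ℕ} {k : Fin n → Bool} (hk : Odd (wt k)) (f : Fin t → Fin n → Bool) :
    ∑ g : Fin t → Fin n → Bool, ind n t k f g = 2^t - 1 := by
  have hsplit : ∀ g : Fin t → Fin n → Bool, ind n t k f g
      = (if ∀ j, g j = f j ∨ g j = xo (f j) k then (1:ℂ) else 0) - (if f = g then 1 else 0) := by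
    intro g
    rw [ind]
    by_cases hfg : f = g
    · subst hfg
      rw [if_pos (fun j => Or.inl rfl), if_pos rfl, if_neg (by simp)]
      ring
    · rw [if_neg hfg]
      by_cases hall : ∀ j, g j = f j ∨ g j = xo (f j) k
      · rw [if_pos hall, if_pos ⟨hfg, hall⟩]; ring
      · rw [if_neg hall, if_neg (fun h => hall h.2)]; ring
  rw [Finset.sum_congr rfl fun g _ => hsplit g, Finset.sum_sub_distrib]
  have h2 : ∑ g : Fin t → Fin n → Bool, (if f = g then (1:ℂ) else 0) = 1 := by
    rw [Finset.sum_ite_eq]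
    simp
  have h1 : ∑ g : Fin t → Fin n → Bool, (if ∀ j, g j = f j ∨ g j = xo (f j) k then (1:ℂ) else 0)
      = 2^t := by
    have hrw : ∀ g : Fin t → Fin n → Bool,
        (if ∀ j, g j = f j ∨ g j = xo (f j) k then (1:ℂ) else 0)
          = ∏ j, (if g j = f j ∨ g j = xo (f j) k then (1:ℂ) else 0) := by
      intro g
      by_cases h : ∀ j, g j = f j ∨ g j = xo (f j) k
      · rw [if_pos h]
        exact (Finset.prod_eq_one fun j _ => by rw [if_pos (h j)]).symm
      · rw [if_neg h]
        push_neg at h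
        obtain ⟨j, hj1, hj2⟩ := h
        exact (Finset.prod_eq_zero (Finset.mem_univ j)
          (by rw [if_neg (not_or.mpr ⟨hj1, hj2⟩)])).symm
    rw [Finset.sum_congr rfl fun g _ => hrw g, ← Fintype.prod_sum (fun (j : Fin t) (x : Fin n → Bool) => if x = f j ∨ x = xo (f j) k then (1:ℂ) else 0)]
    have hone : ∀ j : Fin t,
        (∑ x : Fin n → Bool, if x = f j ∨ x = xo (f j) k then (1:ℂ) else 0) = 2 := by
      intro j
      have : ∀ x : Fin n → Bool, (if x = f j ∨ x = xo (f j) k then (1:ℂ) else 0)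
          = (if x = f j then (1:ℂ) else 0) + (if x = xo (f j) k then 1 else 0) :=
        fun x => ite_or_add hk (f j) x
      rw [Finset.sum_congr rfl fun x _ => this x, Finset.sum_add_distrib,
        Finset.sum_ite_eq', Finset.sum_ite_eq']
      simp
      norm_num
    rw [Finset.prod_congr rfl fun j _ => hone j, Finset.prod_const, Finset.card_univ,
      Fintype.card_fin]
  rw [h1, h2]


lemma card_fun_pow (n t : ℕ) : Fintype.card (Fin t → Fin n → Bool) = 2 ^ (n * t) := by
  rw [Fintype.card_fun, Fintype.card_fun, Fintype.card_bool, Fintype.card_fin, Fintype.card_fin,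
    ← pow_mul, mul_comm]


theorem trace_norm_bound_t_copies (n t : ℕ) (hn : 1 ≤ n) (ht : 1 ≤ t) :
    traceNorm (((1 : ℂ) / 2 ^ (n-1)) •
        ∑ k ∈ Omega n,
          (tpow (rho0k k) t
            - tpow (((1 : ℂ) / 2 ^ n) • (1 : Matrix (Fin n → Bool) (Fin n → Bool) ℂ)) t))
      ≤ Real.sqrt ((2 ^ t - 1) / 2 ^ (n-1)) := by
  set A := (((1 : ℂ) / 2 ^ (n-1)) •
        ∑ k ∈ Omega n,
          (tpow (rho0k k) t
            - tpow (((1 : ℂ) / 2 ^ n) • (1 : Matrix (Fin n → Bool) (Fin n → Bool) ℂ)) t)) with hA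
  have hAapp : ∀ f g, A f g
      = ((1:ℂ)/2^(n-1)) * (((1:ℂ)/2^(n*t)) * ∑ k ∈ Omega n, ind n t k f g) := by
    intro f g
    rw [hA, Matrix.smul_apply, Matrix.sum_apply, smul_eq_mul]
    congr 1
    rw [Finset.mul_sum]
    refine Finset.sum_congr rfl fun k hk => ?_
    rw [diff_apply (mem_Omega.mp hk), ind]
  have htrace : ((Aᴴ * A).trace)
      = ((1:ℂ)/2^(n-1))^2 * (((1:ℂ)/2^(n*t))^2 *
          ((2:ℂ)^(n-1) * ((2:ℂ)^(n*t) * ((2:ℂ)^t - 1)))) := by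
    have h1 : (Aᴴ * A).trace = ∑ g, ∑ f, (starRingEnd ℂ) (A f g) * A f g := by
      simp [Matrix.trace, Matrix.diag, Matrix.mul_apply, Matrix.conjTranspose_apply]
    have hconj : ∀ f g, (starRingEnd ℂ) (A f g) = A f g := by
      intro f g
      rw [hAapp]
      simp only [_root_.map_mul, map_sum, conj_ind, map_div₀, _root_.map_pow, _root_.map_one,
        Complex.conj_ofNat]
    have h2 : ∀ f g : Fin t → Fin n → Bool, (starRingEnd ℂ) (A f g) * A f g
        = ((1:ℂ)/2^(n-1))^2 * (((1:ℂ)/2^(n*t))^2 * ∑ k ∈ Omega n, ind n t k f g) := by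
      intro f g
      rw [hconj, hAapp]
      have hsq := sum_ind_sq (n := n) (t := t) f g
      calc ((1:ℂ)/2^(n-1)) * (((1:ℂ)/2^(n*t)) * ∑ k ∈ Omega n, ind n t k f g) *
            (((1:ℂ)/2^(n-1)) * (((1:ℂ)/2^(n*t)) * ∑ k ∈ Omega n, ind n t k f g))
          = ((1:ℂ)/2^(n-1))^2 * (((1:ℂ)/2^(n*t))^2 *
              ((∑ k ∈ Omega n, ind n t k f g) * (∑ k ∈ Omega n, ind n t k f g))) := by ring
        _ = _ := by rw [hsq]
    rw [h1]
    rw [Finset.sum_congr rfl fun g _ => Finset.sum_congr rfl fun f _ => h2 f g]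
    simp_rw [← Finset.mul_sum]
    congr 1
    congr 1
    calc ∑ g : Fin t → Fin n → Bool, ∑ f : Fin t → Fin n → Bool, ∑ k ∈ Omega n, ind n t k f g
        = ∑ g : Fin t → Fin n → Bool, ∑ k ∈ Omega n, ∑ f : Fin t → Fin n → Bool, ind n t k f g :=
          Finset.sum_congr rfl fun g _ => Finset.sum_comm
      _ = ∑ k ∈ Omega n, ∑ g : Fin t → Fin n → Bool, ∑ f : Fin t → Fin n → Bool, ind n t k f g :=
          Finset.sum_comm
      _ = ∑ k ∈ Omega n, ∑ f : Fin t → Fin n → Bool, ∑ g : Fin t → Fin n → Bool, ind n t k f g :=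
          Finset.sum_congr rfl fun k _ => Finset.sum_comm
      _ = ∑ k ∈ Omega n, ∑ _f : Fin t → Fin n → Bool, ((2:ℂ)^t - 1) :=
          Finset.sum_congr rfl fun k hk =>
            Finset.sum_congr rfl fun f _ => sum_g_ind (mem_Omega.mp hk) f
      _ = ∑ _k ∈ Omega n, ((2:ℂ)^(n*t) * ((2:ℂ)^t - 1)) := by
          refine Finset.sum_congr rfl fun k _ => ?_
          rw [Finset.sum_const, Finset.card_univ, card_fun_pow, nsmul_eq_mul]
          push_cast
          ring
      _ = (2:ℂ)^(n-1) * ((2:ℂ)^(n*t) * ((2:ℂ)^t - 1)) := by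
          rw [Finset.sum_const, card_Omega hn, nsmul_eq_mul]
          push_cast
          ring
  have hre : ((Aᴴ * A).trace).re = ((2:ℝ)^t - 1) / ((2:ℝ)^(n-1) * (2:ℝ)^(n*t)) := by
    have hval : ((Aᴴ * A).trace)
        = ((((2:ℝ)^t - 1) / ((2:ℝ)^(n-1) * (2:ℝ)^(n*t)) : ℝ) : ℂ) := by
      rw [htrace]
      push_cast
      have h1 : ((2:ℂ)^(n-1)) ≠ 0 := pow_ne_zero _ two_ne_zero
      have h2 : ((2:ℂ)^(n*t)) ≠ 0 := pow_ne_zero _ two_ne_zero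
      field_simp
    rw [hval, Complex.ofReal_re]
  have hb := traceNorm_le A
  rw [hre, card_fun_pow] at hb
  refine hb.trans (le_of_eq (congrArg Real.sqrt ?_))
  have h1 : ((2:ℝ)^(n-1)) ≠ 0 := pow_ne_zero _ two_ne_zero
  have h2 : ((2:ℝ)^(n*t)) ≠ 0 := pow_ne_zero _ two_ne_zero
  push_cast
  field_simp
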